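/- arXiv:1202.1816 — 2 statements merged into one kernel-verified Lean document; each statement's English description precedes it below -/
import Mathlib

section
/- If G is a finite group and A, B are nonempty subsets of G, then |A·B| ≥ min{p(G), |A|+|B|-1}. -/
/-!
The order of a nontrivial element divides `|G|`, so it is at least `p(G)`; hence `p(G)` bounds the
minimal order of a nontrivial element from below, and Mathlib's Cauchy–Davenport inequality in
terms of that minimal order applies.
-/

open Pointwise

/-- `p(G)`: the smallest prime divisor of `|G|`, or `∞` if `G` is trivial. -/
noncomputable def pMul (G : Type*) [Group G] : ℕ∞ :=
  if Nat.card G = 1 then ⊤ else (Nat.card G).minFac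

theorem pMul_le_minOrder (G : Type*) [Group G] : pMul G ≤ Monoid.minOrder G := by
  rw [Monoid.le_minOrder]
  intro a ha ha'
  unfold pMul
  split_ifs with h
  · have : Subsingleton G := (Nat.card_eq_one_iff_unique.mp h).1
    exact absurd (Subsingleton.elim a 1) ha
  · have h_two_le : 2 ≤ orderOf a := by
      have := ha'.orderOf_pos
      have := mt orderOf_eq_one_iff.mp ha
      omega
    exact_mod_cast Nat.minFac_le_of_dvd h_two_le (orderOf_dvd_natCard a)

theorem cauchy_davenport_finite_groups_general (G : Type*) [Group G]
    [DecidableEq G] (A B : Finset G) (hA : A.Nonempty) (hB : B.Nonempty) :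
    min (pMul G) ((A.card + B.card - 1 : ℕ) : ℕ∞) ≤ ((A * B).card : ℕ∞) :=
  (min_le_min_right _ (pMul_le_minOrder G)).trans (cauchy_davenport_minOrder_mul hA hB)

theorem cauchy_davenport_finite_groups (G : Type*) [Group G] [Fintype G]
    [DecidableEq G] (A B : Finset G) (hA : A.Nonempty) (hB : B.Nonempty) :
    min (pMul G) ((A.card + B.card - 1 : ℕ) : ℕ∞) ≤ ((A * B).card : ℕ∞) :=
  cauchy_davenport_finite_groups_general G A B hA hB
end

section
/- Let A be a nonempty subset of Z/pZ with p prime. Then |A ∔ A| ≥ min{p, 2|A|-3}, where A ∔ A = {a+a' mod p : a, a' ∈ A, a ≠ a'} (Dias da Silva–Hamidoune theorem). -/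
/-!
If `p ≤ 2|A| - 3`, then for every `c` the sets `A \ {c/2}` and `c - (A \ {c/2})` are too large
to be disjoint, so `c = a + (c - a)` with `a ≠ c - a`.

Otherwise we follow Alon–Nathanson–Ruzsa. If `A ∔ A` had at most `2n` elements, where
`|A| = n + 2`, choose a monic `P` of degree `2n` vanishing on it. Then `(x - y) P(x + y)` vanishes
on `A × (A \ {a₀})`, while its coefficient of `x^(n+1) y^n` is
`C(2n, n) - C(2n, n+1) = catalan n`, which divides `(2n)!` and is therefore nonzero mod `p`.
Since the polynomial has total degree `2n + 1`, this contradicts the Combinatorial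
Nullstellensatz.
-/

open Finset

def restrictedSumset {α : Type*} [DecidableEq α] [Add α] (A B : Finset α) : Finset α :=
  ((A ×ˢ B).filter (fun ab => ab.1 ≠ ab.2)).image (fun ab => ab.1 + ab.2)

infixl:65 " ∔ " => restrictedSumset

theorem add_mem_restrictedSumset {α : Type*} [DecidableEq α] [Add α] {A B : Finset α} {a b : α}
    (ha : a ∈ A) (hb : b ∈ B) (hab : a ≠ b) : a + b ∈ A ∔ B :=
  mem_image.mpr ⟨(a, b), mem_filter.mpr ⟨mem_product.mpr ⟨ha, hb⟩, hab⟩, rfl⟩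

theorem choose_two_mul_succ_add_catalan (n : ℕ) :
    (2 * n).choose (n + 1) + catalan n = (2 * n).choose n := by
  refine Nat.eq_of_mul_eq_mul_left n.succ_pos ?_
  have h := Nat.choose_succ_right_eq (2 * n) n
  rw [show 2 * n - n = n by omega] at h
  rw [mul_add, succ_mul_catalan_eq_centralBinom, Nat.centralBinom_eq_two_mul_choose]
  zify at h ⊢
  linear_combination h

theorem ZMod.natCast_catalan_ne_zero {p : ℕ} [Fact p.Prime] {n : ℕ} (h : 2 * n < p) :
    (catalan n : ZMod p) ≠ 0 := by
  rw [Ne, ZMod.natCast_eq_zero_iff]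
  intro hdvd
  have hcat : catalan n ∣ (2 * n).factorial := by
    refine (Dvd.intro_left _ (succ_mul_catalan_eq_centralBinom n)).trans ?_
    rw [Nat.centralBinom_eq_two_mul_choose]
    exact Dvd.intro _ ((mul_assoc _ _ _).symm.trans
      (Nat.choose_mul_factorial_mul_factorial (by omega)))
  have := (Nat.Prime.dvd_factorial Fact.out).mp (hdvd.trans hcat)
  omega

open Polynomial in
theorem Polynomial.exists_monic_natDegree_eq_forall_eval_eq_zero {R : Type*} [CommRing R]
    [Nontrivial R] (S : Finset R) {m : ℕ} (hS : #S ≤ m) :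
    ∃ P : R[X], P.Monic ∧ P.natDegree = m ∧ ∀ s ∈ S, P.eval s = 0 := by
  have hprod : (∏ s ∈ S, (X - C s)).Monic := monic_prod_X_sub_C _ S
  refine ⟨(∏ s ∈ S, (X - C s)) * X ^ (m - #S), hprod.mul (monic_X_pow _), ?_,
    fun s hs => ?_⟩
  · rw [hprod.natDegree_mul (monic_X_pow _), natDegree_X_pow,
      natDegree_prod_of_monic _ _ fun s _ => monic_X_sub_C s]
    simp only [natDegree_X_sub_C, sum_const, smul_eq_mul, mul_one]
    omega
  · rw [eval_mul, eval_prod, prod_eq_zero hs (by simp), zero_mul]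

namespace MvPolynomial
open Finsupp (single)

variable {R : Type*} [CommRing R]

noncomputable def restrictedSumPoly (P : Polynomial R) : MvPolynomial (Fin 2) R :=
  (X 0 - X 1) * Polynomial.aeval (X 0 + X 1) P

theorem eval_restrictedSumPoly (P : Polynomial R) (x : Fin 2 → R) :
    eval x (restrictedSumPoly P) = (x 0 - x 1) * P.eval (x 0 + x 1) := by
  rw [restrictedSumPoly, ← aeval_eq_eval, map_mul, ← Polynomial.aeval_algHom_apply]
  simp

theorem isHomogeneous_X_sub_X_mul_X_add_X_pow (i : ℕ) :
    ((X 0 - X 1) * (X 0 + X 1) ^ i : MvPolynomial (Fin 2) R).IsHomogeneous (i + 1) := by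
  rw [add_comm i 1]
  exact ((isHomogeneous_X R 0).sub (isHomogeneous_X R 1)).mul
    (by simpa using ((isHomogeneous_X R 0).add (isHomogeneous_X R 1)).pow i)

theorem restrictedSumPoly_eq_sum (P : Polynomial R) :
    restrictedSumPoly P =
      ∑ i ∈ range (P.natDegree + 1), P.coeff i • ((X 0 - X 1) * (X 0 + X 1) ^ i) := by
  simp only [restrictedSumPoly, Polynomial.aeval_eq_sum_range, mul_sum, mul_smul_comm]

theorem totalDegree_restrictedSumPoly_le (P : Polynomial R) :
    (restrictedSumPoly P).totalDegree ≤ P.natDegree + 1 := by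
  rw [restrictedSumPoly_eq_sum]
  refine (totalDegree_finsetSum _ _).trans (Finset.sup_le fun i hi => ?_)
  refine (totalDegree_smul_le _ _).trans ?_
  exact (isHomogeneous_X_sub_X_mul_X_add_X_pow i).totalDegree_le.trans
    (by rw [mem_range] at hi; omega)

theorem coeff_restrictedSumPoly_of_monic {P : Polynomial R} (hP : P.Monic) {d : Fin 2 →₀ ℕ}
    (hd : d.degree = P.natDegree + 1) :
    coeff d (restrictedSumPoly P) = coeff d ((X 0 - X 1) * (X 0 + X 1) ^ P.natDegree) := by
  rw [restrictedSumPoly_eq_sum, coeff_sum, sum_eq_single_of_mem _ (self_mem_range_succ _),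
    coeff_smul, hP.coeff_natDegree, one_smul]
  intro i hi hne
  rw [coeff_smul, (isHomogeneous_X_sub_X_mul_X_add_X_pow i).coeff_eq_zero (by omega), smul_zero]

theorem coeff_single_add_single_X_add_X_pow (a b : ℕ) :
    coeff (single 0 a + single 1 b) ((X 0 + X 1) ^ (a + b) : MvPolynomial (Fin 2) R) =
      (a + b).choose a := by
  rw [add_pow, coeff_sum, sum_eq_single_of_mem a (by simp)]
  · rw [mul_comm, ← C_eq_coe_nat, coeff_C_mul, X_pow_eq_monomial, X_pow_eq_monomial,
      monomial_mul, coeff_monomial, if_pos (by simp), mul_one, mul_one]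
  · intro k hk hka
    rw [mul_comm, ← C_eq_coe_nat, coeff_C_mul, X_pow_eq_monomial, X_pow_eq_monomial,
      monomial_mul, coeff_monomial, if_neg, mul_zero]
    exact fun h => hka (by simpa using congrArg (· 0) h)

theorem coeff_single_add_single_X_sub_X_mul_X_add_X_pow (i j : ℕ) :
    coeff (single 0 (i + 1) + single 1 j)
        ((X 0 - X 1) * (X 0 + X 1) ^ (i + j) : MvPolynomial (Fin 2) R) =
      (i + j).choose i - (i + j).choose (i + 1) := by
  rw [sub_mul, coeff_sub, coeff_X_mul', if_pos (by simp), coeff_X_mul']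
  have h0 : single 0 (i + 1) + single 1 j - single (0 : Fin 2) 1 = single 0 i + single 1 j := by
    ext k; fin_cases k <;> simp
  rw [h0, coeff_single_add_single_X_add_X_pow]
  rcases j with _ | j
  · simp [Nat.choose_succ_self]
  · have h1 : single 0 (i + 1) + single 1 (j + 1) - single (1 : Fin 2) 1 =
        single 0 (i + 1) + single 1 j := by
      ext k; fin_cases k <;> simp
    rw [if_pos (by simp), h1, show i + (j + 1) = i + 1 + j by omega,
      coeff_single_add_single_X_add_X_pow]

end MvPolynomial

open MvPolynomial in
theorem two_mul_add_one_le_card_restrictedSumset {F : Type*} [Field F] [DecidableEq F]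
    {A : Finset F} {n : ℕ} (hA : #A = n + 2) (hn : (catalan n : F) ≠ 0) :
    2 * n + 1 ≤ #(A ∔ A) := by
  by_contra! hsmall
  obtain ⟨P, hPmonic, hPdeg, hPzero⟩ :=
    Polynomial.exists_monic_natDegree_eq_forall_eval_eq_zero (A ∔ A) (m := 2 * n) (by omega)
  obtain ⟨a₀, ha₀⟩ : A.Nonempty := card_pos.mp (by omega)
  set t : Fin 2 →₀ ℕ := Finsupp.single 0 (n + 1) + Finsupp.single 1 n with ht
  have hdeg : t.degree = P.natDegree + 1 := by
    simp only [ht, map_add, Finsupp.degree_single, hPdeg]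
    ring
  have hcoeff : coeff t (restrictedSumPoly P) = catalan n := by
    rw [coeff_restrictedSumPoly_of_monic hPmonic hdeg, hPdeg, two_mul,
      coeff_single_add_single_X_sub_X_mul_X_add_X_pow, ← two_mul,
      ← choose_two_mul_succ_add_catalan, Nat.cast_add, add_sub_cancel_left]
  have htot : (restrictedSumPoly P).totalDegree = t.degree :=
    le_antisymm (hdeg ▸ totalDegree_restrictedSumPoly_le P)
      (le_totalDegree (mem_support_iff.mpr (hcoeff ▸ hn)))
  obtain ⟨x, hx, hfx⟩ := combinatorial_nullstellensatz_exists_eval_nonzero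
    (restrictedSumPoly P) t (hcoeff ▸ hn) htot ![A, A.erase a₀]
    (by intro i; fin_cases i <;> simp [ht, hA, card_erase_of_mem ha₀])
  have hx₀ : x 0 ∈ A := hx 0
  have hx₁ : x 1 ∈ A := mem_of_mem_erase (hx 1)
  rw [eval_restrictedSumPoly] at hfx
  rcases eq_or_ne (x 0) (x 1) with heq | hne
  · exact hfx (by rw [heq, sub_self, zero_mul])
  · exact hfx (by rw [hPzero _ (add_mem_restrictedSumset hx₀ hx₁ hne), mul_zero])

theorem restrictedSumset_eq_univ {F : Type*} [Field F] [Fintype F] [DecidableEq F]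
    (h2 : (2 : F) ≠ 0) {A : Finset F} (hA : Fintype.card F + 3 ≤ 2 * #A) : A ∔ A = univ := by
  refine eq_univ_iff_forall.mpr fun c => ?_
  set A' := A.erase (c / 2)
  have hA' : #A - 1 ≤ #A' := pred_card_le_card_erase
  have hcard : #(A'.image (c - ·)) = #A' := card_image_of_injective _ sub_right_injective
  obtain ⟨a, ha⟩ := inter_nonempty_of_card_lt_card_add_card (subset_univ A')
    (subset_univ (A'.image (c - ·))) (by rw [card_univ, hcard]; omega)
  obtain ⟨haA', ha⟩ := mem_inter.mp ha
  obtain ⟨b, hbA', rfl⟩ := mem_image.mp ha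
  have hab : c - b ≠ b := fun h =>
    ne_of_mem_erase hbA' (by rw [eq_div_iff h2]; linear_combination -h)
  simpa using add_mem_restrictedSumset (mem_of_mem_erase haA') (mem_of_mem_erase hbA') hab

theorem dias_da_silva_hamidoune_general (p : ℕ) (hp : p.Prime) (A : Finset (ZMod p)) :
    min p (2 * A.card - 3) ≤
      (((A ×ˢ A).filter (fun ab => ab.1 ≠ ab.2)).image
        (fun ab => ab.1 + ab.2)).card := by
  have : Fact p.Prime := ⟨hp⟩
  change min p (2 * #A - 3) ≤ #(A ∔ A)
  have hAp : #A ≤ p := by simpa using A.card_le_univ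
  have hp2 := hp.two_le
  rcases le_or_gt p (2 * #A - 3) with hlarge | hsmall
  · have h2 : (2 : ZMod p) ≠ 0 := by
      rw [Ne, ← Nat.cast_ofNat, ZMod.natCast_eq_zero_iff]
      intro h
      have := Nat.le_of_dvd two_pos h
      omega
    rw [restrictedSumset_eq_univ h2 (by rw [ZMod.card]; omega), card_univ, ZMod.card]
    exact min_le_left _ _
  · obtain hA | ⟨n, hn⟩ : #A ≤ 1 ∨ ∃ n, #A = n + 2 :=
      (le_or_gt #A 1).imp id fun h => ⟨#A - 2, by omega⟩
    · omega
    · have := two_mul_add_one_le_card_restrictedSumset hn (ZMod.natCast_catalan_ne_zero (by omega))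
      omega

theorem dias_da_silva_hamidoune (p : ℕ) (hp : p.Prime) (A : Finset (ZMod p))
    (hA : A.Nonempty) :
    min p (2 * A.card - 3) ≤
      (((A ×ˢ A).filter (fun ab => ab.1 ≠ ab.2)).image
        (fun ab => ab.1 + ab.2)).card :=
  dias_da_silva_hamidoune_general p hp A
end
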